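/- arXiv:1505.08070 — 3 statements merged into one kernel-verified Lean document; each statement's English description precedes it below -/
import Mathlib

section
/- Suppose t, t̃ ∈ ℝ³ are nonzero and A, Ã are invertible 3×3 real matrices with [t]× A = [t̃]× Ã. Then there exist λ ≠ 0 and v ∈ ℝ³ such that t̃ = λ t and λ Ã = A + t vᵀ. -/
open Matrix
/-- The 3×3 skew-symmetric matrix `[t]×` of the cross product with `t`. -/
def skew (t : Fin 3 → ℝ) : Matrix (Fin 3) (Fin 3) ℝ :=
  !![0, -t 2, t 1; t 2, 0, -t 0; -t 1, t 0, 0]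

/-! `[t]×` has kernel `ℝ t` on both sides, so `[t]× A = [t̃]× Ã` forces `t̃ ∥ t` after cancelling
the invertible `A` on the right of `t̃ᵀ [t]× A = t̃ᵀ [t̃]× Ã = 0`. Writing `t̃ = λ t`, every column of
`λ Ã - A` then lies in the kernel of `[t]×`, i.e. `λ Ã - A = t vᵀ`. -/

theorem skew_mulVec (t x : Fin 3 → ℝ) : skew t *ᵥ x = t ⨯₃ x := by
  ext i
  fin_cases i <;> simp [skew, cross_apply, mulVec, dotProduct, Fin.sum_univ_three] <;> ring

theorem vecMul_skew (t x : Fin 3 → ℝ) : x ᵥ* skew t = x ⨯₃ t := by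
  ext i
  fin_cases i <;> simp [skew, cross_apply, vecMul, dotProduct, Fin.sum_univ_three] <;> ring

theorem skew_smul (c : ℝ) (t : Fin 3 → ℝ) : skew (c • t) = c • skew t := by
  ext i j
  fin_cases i <;> fin_cases j <;> simp [skew]

theorem exists_smul_eq_of_cross_eq_zero {F : Type*} [Field F] {t x : Fin 3 → F} (ht : t ≠ 0)
    (h : t ⨯₃ x = 0) : ∃ c : F, c • t = x := by
  by_contra! hx
  exact crossProduct_ne_zero_iff_linearIndependent.mpr
    ((LinearIndependent.pair_iff' ht).mpr hx) h

theorem exists_eq_vecMulVec_of_skew_mul_eq_zero {t : Fin 3 → ℝ} {M : Matrix (Fin 3) (Fin 3) ℝ}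
    (ht : t ≠ 0) (h : skew t * M = 0) : ∃ v : Fin 3 → ℝ, M = vecMulVec t v := by
  have hcol : ∀ j, t ⨯₃ Mᵀ j = 0 := fun j => by
    rw [← skew_mulVec]
    ext i
    simpa [mulVec, dotProduct, mul_apply] using congrFun (congrFun h i) j
  choose v hv using fun j => exists_smul_eq_of_cross_eq_zero ht (hcol j)
  refine ⟨v, ?_⟩
  ext i j
  rw [vecMulVec_apply, mul_comm, ← smul_eq_mul, ← Pi.smul_apply, hv j, transpose_apply]

theorem essential_decomposition_ambiguity_general (t tt : Fin 3 → ℝ)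
    (A At : Matrix (Fin 3) (Fin 3) ℝ)
    (ht : t ≠ 0) (htt : tt ≠ 0) (hA : IsUnit A.det)
    (h : skew t * A = skew tt * At) :
    ∃ l : ℝ, l ≠ 0 ∧ ∃ v : Fin 3 → ℝ, tt = l • t ∧ l • At = A + vecMulVec t v := by
  have hcross : tt ⨯₃ t = 0 := by
    apply vecMul_injective_of_isUnit ((isUnit_iff_isUnit_det A).mpr hA)
    dsimp only
    rw [← vecMul_skew, vecMul_vecMul, h, ← vecMul_vecMul, vecMul_skew, cross_self, zero_vecMul,
      zero_vecMul]
  obtain ⟨l, rfl⟩ := exists_smul_eq_of_cross_eq_zero ht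
    (by rw [← cross_anticomm, hcross, neg_zero])
  have hl : l ≠ 0 := by
    rintro rfl
    simp at htt
  obtain ⟨v, hv⟩ := exists_eq_vecMulVec_of_skew_mul_eq_zero ht (M := l • At - A)
    (by rw [mul_sub, Matrix.mul_smul, ← Matrix.smul_mul, ← skew_smul, ← h, sub_self])
  exact ⟨l, hl, v, rfl, by rw [← hv, add_sub_cancel]⟩

/-- Ambiguity in decomposing a rank-2 essential matrix: if
`[t]× A = [t̃]× Ã` then `t̃ = λ t` and `λ Ã = A + t vᵀ` for some `λ ≠ 0`, `v`. -/
theorem essential_decomposition_ambiguity (t tt : Fin 3 → ℝ)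
    (A At : Matrix (Fin 3) (Fin 3) ℝ)
    (ht : t ≠ 0) (htt : tt ≠ 0) (hA : IsUnit A.det) (hAt : IsUnit At.det)
    (h : skew t * A = skew tt * At) :
    ∃ l : ℝ, l ≠ 0 ∧ ∃ v : Fin 3 → ℝ, tt = l • t ∧ l • At = A + vecMulVec t v :=
  essential_decomposition_ambiguity_general t tt A At ht htt hA h
end

section
/- Suppose q, q' ∈ ℝ³ with last coordinates 1 lie in correspondence under the affine deformation (A, t): there exists λ ≠ 0 with q' ≡ λ A q + t up to nonzero scale. If E₂ is any 3×3 matrix with q'ᵀ E₂ q = 0, then the original space point P = (λ q, 1) ∈ ℝ⁴ satisfies the quadric equation Pᵀ Q P = 0, where Q = [A; t]ᵀ E₂ [I; 0] (a 4×4 matrix, [A;t] being the 3×4 matrix with columns of A followed by t, and [I;0] the 3×4 matrix of identity and a zero column). -/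
open Matrix

section Augment

variable {R : Type*} [CommSemiring R] {m n : ℕ}

theorem dotProduct_transpose_mul_mul_mulVec {ι κ : Type*} [Fintype ι] [Fintype κ]
    (M : Matrix κ ι R) (E : Matrix κ κ R) (N : Matrix κ ι R) (x : ι → R) :
    x ⬝ᵥ (Mᵀ * E * N) *ᵥ x = (M *ᵥ x) ⬝ᵥ E *ᵥ (N *ᵥ x) := by
  rw [← mulVec_mulVec, ← mulVec_mulVec, dotProduct_mulVec, vecMul_transpose]

theorem augment_mulVec (A : Matrix (Fin m) (Fin n) R) (t : Fin m → R) (v : Fin n → R) (s : R) :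
    (of fun i (j : Fin (n + 1)) => if h : (j : ℕ) < n then A i ⟨j, h⟩ else t i) *ᵥ
        (fun j : Fin (n + 1) => if h : (j : ℕ) < n then v ⟨j, h⟩ else s) =
      A *ᵥ v + s • t := by
  funext i
  simp [mulVec, dotProduct, Fin.sum_univ_castSucc, mul_comm (t i) s]

theorem truncate_mulVec (v : Fin n → R) (s : R) :
    (of fun (i : Fin n) (j : Fin (n + 1)) => if (i : ℕ) = j then (1 : R) else 0) *ᵥ
        (fun j : Fin (n + 1) => if h : (j : ℕ) < n then v ⟨j, h⟩ else s) = v := by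
  funext i
  simp [mulVec, dotProduct, Fin.sum_univ_castSucc, i.isLt.ne, Fin.val_inj]

end Augment

theorem critical_surface_quadric_general (A E2 : Matrix (Fin 3) (Fin 3) ℝ)
    (t q q' : Fin 3 → ℝ)
    (lam : ℝ)
    (hcorr : ∃ mu : ℝ, mu ≠ 0 ∧ mu • q' = lam • A.mulVec q + t)
    (hE2 : q' ⬝ᵥ E2.mulVec q = 0) :
    let At : Matrix (Fin 3) (Fin 4) ℝ :=
      Matrix.of fun i j => if h : (j : ℕ) < 3 then A i ⟨j, h⟩ else t i
    let proj : Matrix (Fin 3) (Fin 4) ℝ :=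
      Matrix.of fun i j => if (i : ℕ) = (j : ℕ) then (1 : ℝ) else 0
    let P : Fin 4 → ℝ := fun i => if h : (i : ℕ) < 3 then lam * q ⟨i, h⟩ else 1
    let Q : Matrix (Fin 4) (Fin 4) ℝ := Atᵀ * E2 * proj
    P ⬝ᵥ Q.mulVec P = 0 := by
  intro At proj P Q
  obtain ⟨mu, -, hcorr⟩ := hcorr
  have hAt : At *ᵥ P = mu • q' := by
    rw [hcorr, ← mulVec_smul, ← one_smul ℝ t]
    exact augment_mulVec A t (lam • q) 1
  have hproj : proj *ᵥ P = lam • q := truncate_mulVec (lam • q) 1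
  rw [dotProduct_transpose_mul_mul_mulVec, hAt, hproj, mulVec_smul, smul_dotProduct,
    dotProduct_smul, hE2, smul_zero, smul_zero]

/-- Critical surface condition: if an alternative matrix `E₂` annihilates a
corresponding pair `(q,q')`, then the space point `P = (λq, 1)` lies on the
quadric `Q = [A;t]ᵀ E₂ [I;0]`. -/
theorem critical_surface_quadric (A E2 : Matrix (Fin 3) (Fin 3) ℝ)
    (t q q' : Fin 3 → ℝ) (hq : q 2 = 1) (hq' : q' 2 = 1)
    (lam : ℝ) (hlam : lam ≠ 0)
    (hcorr : ∃ mu : ℝ, mu ≠ 0 ∧ mu • q' = lam • A.mulVec q + t)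
    (hE2 : q' ⬝ᵥ E2.mulVec q = 0) :
    let At : Matrix (Fin 3) (Fin 4) ℝ :=
      Matrix.of fun i j => if h : (j : ℕ) < 3 then A i ⟨j, h⟩ else t i
    let proj : Matrix (Fin 3) (Fin 4) ℝ :=
      Matrix.of fun i j => if (i : ℕ) = (j : ℕ) then (1 : ℝ) else 0
    let P : Fin 4 → ℝ := fun i => if h : (i : ℕ) < 3 then lam * q ⟨i, h⟩ else 1
    let Q : Matrix (Fin 4) (Fin 4) ℝ := Atᵀ * E2 * proj
    P ⬝ᵥ Q.mulVec P = 0 :=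
  critical_surface_quadric_general A E2 t q q' lam hcorr hE2
end

section
/- Let Φ: ℝ³ → ℝ³ be given by Φ₁(X,Y,Z) = aₓX + bₓY + cₓZ + dₓ, Φ₂(X,Y,Z) = a_y Y² + b_y X² + c_y Z², Φ₃(X,Y,Z) = a_z Z³. Suppose q = (qₓ, q_y, 1), q' = (qₓ', q_y', 1), and there exists α ≠ 0 with qₓ' Φ₃(α q) = Φ₁(α q) and q_y' Φ₃(α q) = Φ₂(α q). Then the following polynomial identity in the image coordinates holds: (b_y qₓ² + a_y q_y² + c_y)³ qₓ' − a_z q_y'² (aₓ qₓ + bₓ q_y + cₓ)(b_y qₓ² + a_y q_y² + c_y) − a_z² dₓ q_y'³ = 0. -/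
/-!
On the ray `α q` the third coordinate is `a_z α³` and the second is `α² Q` with
`Q = b_y qₓ² + a_y q_y² + c_y`, so the second projection equation fixes the depth
linearly, `a_z q_y' α = Q`. Substituting this into the first projection equation,
multiplied by `a_z² q_y'³`, gives the stated polynomial.
-/

open Matrix

lemma mul_mul_eq_of_mul_cube_eq_sq_mul {a q Q α : ℝ} (hα : α ≠ 0)
    (h : q * (a * α ^ 3) = α ^ 2 * Q) : a * q * α = Q :=
  mul_left_cancel₀ (pow_ne_zero 2 hα) (by linear_combination h)

lemma matching_polynomial_eq_zero_of_depth {a qx' qy' L Q d α : ℝ}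
    (hdepth : a * qy' * α = Q) (hx : qx' * (a * α ^ 3) = α * L + d) :
    Q ^ 3 * qx' - a * qy' ^ 2 * L * Q - a ^ 2 * d * qy' ^ 3 = 0 := by
  subst hdepth
  linear_combination (a ^ 2 * qy' ^ 3) * hx

/-- Matching constraint for the polynomial deformation
`Φ = (aₓX+bₓY+cₓZ+dₓ, a_yY²+b_yX²+c_yZ², a_zZ³)`: eliminating the depth `α`
from the projection equations yields a polynomial identity in the image
coordinates. -/
theorem polynomial_matching_constraint
    (ax bx cx dx ay by_ cy az : ℝ) (qx qy qx' qy' : ℝ)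
    (Φ1 : ℝ → ℝ → ℝ → ℝ) (hΦ1 : ∀ X Y Z, Φ1 X Y Z = ax * X + bx * Y + cx * Z + dx)
    (Φ2 : ℝ → ℝ → ℝ → ℝ) (hΦ2 : ∀ X Y Z, Φ2 X Y Z = ay * Y ^ 2 + by_ * X ^ 2 + cy * Z ^ 2)
    (Φ3 : ℝ → ℝ → ℝ → ℝ) (hΦ3 : ∀ X Y Z, Φ3 X Y Z = az * Z ^ 3)
    (h : ∃ α : ℝ, α ≠ 0 ∧
      qx' * Φ3 (α * qx) (α * qy) α = Φ1 (α * qx) (α * qy) α ∧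
      qy' * Φ3 (α * qx) (α * qy) α = Φ2 (α * qx) (α * qy) α) :
    (by_ * qx ^ 2 + ay * qy ^ 2 + cy) ^ 3 * qx'
      - az * qy' ^ 2 * (ax * qx + bx * qy + cx)
          * (by_ * qx ^ 2 + ay * qy ^ 2 + cy)
      - az ^ 2 * dx * qy' ^ 3 = 0 := by
  obtain ⟨α, hα, h1, h2⟩ := h
  rw [hΦ1, hΦ3] at h1
  rw [hΦ2, hΦ3] at h2
  have hdepth : az * qy' * α = by_ * qx ^ 2 + ay * qy ^ 2 + cy :=
    mul_mul_eq_of_mul_cube_eq_sq_mul hα (by linear_combination h2)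
  exact matching_polynomial_eq_zero_of_depth hdepth (by linear_combination h1)
end
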